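/- arXiv:2304.03324 — 6 statements merged into one kernel-verified Lean document; each statement's English description precedes it below -/
import Mathlib

section
/- Let X be a finite-dimensional Banach space over ℝ or ℂ, let 1 < p < ∞ with conjugate exponent q, and let ({f_j}_{j=1}^n, {τ_j}_{j=1}^n) and ({g_k}_{k=1}^m, {ω_k}_{k=1}^m) be p-Schauder frames for X. Then for every nonzero x ∈ X, (‖θ_f x‖_0)^{1/p} · (‖θ_g x‖_0)^{1/q} ≥ 1 / max_{1≤j≤n, 1≤k≤m} |f_j(ω_k)|, where ‖·‖_0 counts nonzero coordinates and θ_f x = (f_j(x))_j, θ_g x = (g_k(x))_k. -/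
/-!
Expanding `x = ∑ₖ gₖ(x) ωₖ` gives `|fⱼ(x)| ≤ M ∑ₖ |gₖ(x)|` with `M = maxⱼₖ |fⱼ(ωₖ)|`, and Hölder's
inequality on the support `S` of `θ_g x` bounds `∑ₖ |gₖ(x)|` by `|S|^{1/q} ‖x‖`. Feeding this uniform
bound into `‖x‖ = ‖θ_f x‖_p`, where only the `|T|` nonzero coordinates of `θ_f x` contribute, gives
`‖x‖ ≤ |T|^{1/p} M |S|^{1/q} ‖x‖`; dividing by `‖x‖ ≠ 0` is the claim.
-/

open Finset

theorem LinearMap.norm_map_sum_smul_le {ι 𝕜 E F : Type*} [NormedField 𝕜] [AddCommGroup E]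
    [Module 𝕜 E] [SeminormedAddCommGroup F] [NormedSpace 𝕜 F] (φ : E →ₗ[𝕜] F) (s : Finset ι)
    (c : ι → 𝕜) (v : ι → E) {M : ℝ} (hM : ∀ i ∈ s, ‖φ (v i)‖ ≤ M) :
    ‖φ (∑ i ∈ s, c i • v i)‖ ≤ M * ∑ i ∈ s, ‖c i‖ := by
  rw [map_sum, mul_sum]
  refine (norm_sum_le _ _).trans (sum_le_sum fun i hi => ?_)
  rw [map_smul, norm_smul, mul_comm]
  exact mul_le_mul_of_nonneg_right (hM i hi) (norm_nonneg _)

section CardSupport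

variable {ι E : Type*} [Fintype ι] [SeminormedAddCommGroup E] [DecidableEq E]

theorem sum_norm_le_card_support_rpow_mul {p q : ℝ} (hpq : p.HolderConjugate q) (a : ι → E) :
    ∑ i, ‖a i‖ ≤ (#{i | a i ≠ 0} : ℝ) ^ (1 / q) * (∑ i, ‖a i‖ ^ p) ^ (1 / p) := by
  set S : Finset ι := {i | a i ≠ 0}
  have h_support : ∑ i ∈ S, ‖a i‖ = ∑ i, ‖a i‖ :=
    sum_filter_of_ne fun i _ h ha => h (by simp [ha])
  calc ∑ i, ‖a i‖ = ∑ i ∈ S, 1 * ‖a i‖ := by simp only [one_mul, h_support]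
    _ ≤ (∑ i ∈ S, (1 : ℝ) ^ q) ^ (1 / q) * (∑ i ∈ S, ‖a i‖ ^ p) ^ (1 / p) :=
      (Real.inner_le_Lp_mul_Lq_of_nonneg S hpq.symm (fun _ _ => zero_le_one)
        fun _ _ => norm_nonneg _)
    _ ≤ (#S : ℝ) ^ (1 / q) * (∑ i, ‖a i‖ ^ p) ^ (1 / p) := by
      rw [Real.one_rpow, sum_const, nsmul_one]
      gcongr
      · exact hpq.one_div_nonneg
      · exact subset_univ S

theorem rpow_sum_norm_rpow_le_card_support_rpow_mul {p C : ℝ} (hp : 0 < p) (hC0 : 0 ≤ C)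
    (a : ι → E) (hC : ∀ i, ‖a i‖ ≤ C) :
    (∑ i, ‖a i‖ ^ p) ^ (1 / p) ≤ (#{i | a i ≠ 0} : ℝ) ^ (1 / p) * C := by
  have h_support : ∑ i ∈ {i | a i ≠ 0}, ‖a i‖ ^ p = ∑ i, ‖a i‖ ^ p :=
    sum_filter_of_ne fun i _ h ha => h (by simp [ha, hp.ne'])
  calc (∑ i, ‖a i‖ ^ p) ^ (1 / p) ≤ (#{i | a i ≠ 0} * C ^ p) ^ (1 / p) := by
        rw [← h_support, ← nsmul_eq_mul, ← sum_const]
        gcongr with i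
        exact hC i
    _ = (#{i | a i ≠ 0} : ℝ) ^ (1 / p) * C := by
      rw [Real.mul_rpow (by positivity) (by positivity), one_div,
        Real.rpow_rpow_inv hC0 hp.ne']

end CardSupport

theorem functional_uncertainty_principle_general
    {𝕂 : Type*} [RCLike 𝕂] {X : Type*} [NormedAddCommGroup X] [NormedSpace 𝕂 X]
    {n m : ℕ} (p q : ℝ) (hp : 1 < p) (hpq : 1 / p + 1 / q = 1)
    (f : Fin n → (X →L[𝕂] 𝕂))
    (g : Fin m → (X →L[𝕂] 𝕂)) (ω : Fin m → X)
    (hf1 : ∀ x : X, ‖x‖ ^ p = ∑ j, ‖f j x‖ ^ p)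
    (hg1 : ∀ x : X, ‖x‖ ^ p = ∑ k, ‖g k x‖ ^ p)
    (hg2 : ∀ x : X, x = ∑ k, g k x • ω k)
    (x : X) (hx : x ≠ 0) :
    ((univ.filter fun j => f j x ≠ 0).card : ℝ) ^ (1 / p) *
      ((univ.filter fun k => g k x ≠ 0).card : ℝ) ^ (1 / q) ≥
      1 / (⨆ jk : Fin n × Fin m, ‖f jk.1 (ω jk.2)‖) := by
  have hpq' : p.HolderConjugate q := Real.holderConjugate_iff.mpr ⟨hp, by simpa [one_div] using hpq⟩
  have h_root (a : ℝ) (ha : 0 ≤ a) : (a ^ p) ^ (1 / p) = a := by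
    rw [one_div, Real.rpow_rpow_inv ha hpq'.ne_zero]
  have hM0 : 0 ≤ ⨆ jk : Fin n × Fin m, ‖f jk.1 (ω jk.2)‖ :=
    Real.iSup_nonneg fun _ => norm_nonneg _
  have hM (j : Fin n) (k : Fin m) : ‖f j (ω k)‖ ≤ ⨆ jk : Fin n × Fin m, ‖f jk.1 (ω jk.2)‖ :=
    le_ciSup (f := fun jk : Fin n × Fin m => ‖f jk.1 (ω jk.2)‖) (Set.finite_range _).bddAbove (j, k)
  generalize (⨆ jk : Fin n × Fin m, ‖f jk.1 (ω jk.2)‖) = M at hM0 hM ⊢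
  set S : ℝ := ↑(#{k | g k x ≠ 0})
  have hS : 0 ≤ S ^ (1 / q) := Real.rpow_nonneg (Nat.cast_nonneg _) _
  have h_sum_g : ∑ k, ‖g k x‖ ≤ S ^ (1 / q) * ‖x‖ := by
    simpa only [← hg1, h_root _ (norm_nonneg x)] using
      sum_norm_le_card_support_rpow_mul hpq' fun k => g k x
  have h_f (j : Fin n) : ‖f j x‖ ≤ M * (S ^ (1 / q) * ‖x‖) := by
    have := (f j).toLinearMap.norm_map_sum_smul_le univ (fun k => g k x) ω fun k _ => hM j k
    rw [← hg2 x] at this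
    exact this.trans (mul_le_mul_of_nonneg_left h_sum_g hM0)
  have h_x : ‖x‖ * 1 ≤ ‖x‖ * ((#{j | f j x ≠ 0} : ℝ) ^ (1 / p) * S ^ (1 / q) * M) :=
    calc ‖x‖ * 1 = (∑ j, ‖f j x‖ ^ p) ^ (1 / p) := by rw [mul_one, ← hf1, h_root _ (norm_nonneg x)]
      _ ≤ (#{j | f j x ≠ 0} : ℝ) ^ (1 / p) * (M * (S ^ (1 / q) * ‖x‖)) :=
        rpow_sum_norm_rpow_le_card_support_rpow_mul hpq'.pos
          (mul_nonneg hM0 (mul_nonneg hS (norm_nonneg x))) _ h_f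
      _ = _ := by ring
  -- `1 / 0 = 0`, so the case `M = 0` needs no separate treatment.
  exact div_le_of_le_mul₀ hM0 (mul_nonneg (Real.rpow_nonneg (Nat.cast_nonneg _) _) hS)
    (le_of_mul_le_mul_left h_x (norm_pos_iff.mpr hx))

theorem functional_uncertainty_principle
    {𝕂 : Type*} [RCLike 𝕂] {X : Type*} [NormedAddCommGroup X] [NormedSpace 𝕂 X]
    [FiniteDimensional 𝕂 X]
    {n m : ℕ} (p q : ℝ) (hp : 1 < p) (hpq : 1 / p + 1 / q = 1)
    (f : Fin n → (X →L[𝕂] 𝕂)) (τ : Fin n → X)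
    (g : Fin m → (X →L[𝕂] 𝕂)) (ω : Fin m → X)
    (hf1 : ∀ x : X, ‖x‖ ^ p = ∑ j, ‖f j x‖ ^ p)
    (hf2 : ∀ x : X, x = ∑ j, f j x • τ j)
    (hg1 : ∀ x : X, ‖x‖ ^ p = ∑ k, ‖g k x‖ ^ p)
    (hg2 : ∀ x : X, x = ∑ k, g k x • ω k)
    (x : X) (hx : x ≠ 0) :
    ((univ.filter fun j => f j x ≠ 0).card : ℝ) ^ (1 / p) *
      ((univ.filter fun k => g k x ≠ 0).card : ℝ) ^ (1 / q) ≥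
      1 / (⨆ jk : Fin n × Fin m, ‖f jk.1 (ω jk.2)‖) :=
  functional_uncertainty_principle_general p q hp hpq f g ω hf1 hg1 hg2 x hx
end

section
/- Let {τ_j}_{j=1}^n and {ω_k}_{k=1}^n be Parseval frames for a finite-dimensional Hilbert space H. Then for every nonzero h ∈ H, ‖θ_τ h‖_0 · ‖θ_ω h‖_0 ≥ 1 / max_{1≤j,k≤n} |⟨τ_j, ω_k⟩|², where θ_τ h = (⟨h, τ_j⟩)_{j=1}^n and θ_ω h = (⟨h, ω_k⟩)_{k=1}^n. -/
open Finset

/-!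
The Parseval identity makes the analysis map `θ_ω` an isometry; since it then preserves inner
products, it gives the reconstruction `⟪h, g⟫ = ∑ₖ ⟪h, ωₖ⟫ ⟪ωₖ, g⟫`, where only the
`k` in the support `S_ω` of `θ_ω h` contribute. Cauchy–Schwarz over `S_ω` bounds every coefficient:
`|⟪h, τⱼ⟫|² ≤ ‖h‖² · |S_ω| · M`, with `M` the largest `|⟪τⱼ, ωₖ⟫|²`. Summing these bounds over the
support `S_τ` of `θ_τ h` and using the Parseval identity for `τ` gives `‖h‖² ≤ |S_τ| |S_ω| M ‖h‖²`.
-/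

section

variable {𝕂 H ι κ : Type*} [RCLike 𝕂] [NormedAddCommGroup H] [InnerProductSpace 𝕂 H]
  [Fintype ι] [Fintype κ]

variable (𝕂) in
def IsParsevalFrame (ω : ι → H) : Prop :=
  ∀ h : H, ‖h‖ ^ 2 = ∑ k, ‖(inner 𝕂 h (ω k) : 𝕂)‖ ^ 2

variable (𝕂) in
/-- The coordinates are `⟪ωₖ, x⟫`, the conjugates of the paper's `⟪x, ωₖ⟫`, so that the map is
linear. -/
noncomputable def frameAnalysis (ω : ι → H) : H →ₗ[𝕂] EuclideanSpace 𝕂 ι :=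
  (WithLp.linearEquiv 2 𝕂 (ι → 𝕂)).symm.toLinearMap ∘ₗ
    LinearMap.pi fun k => (innerSL 𝕂 (ω k)).toLinearMap

namespace IsParsevalFrame

variable {ω : ι → H}

theorem norm_frameAnalysis (hω : IsParsevalFrame 𝕂 ω) (x : H) :
    ‖frameAnalysis 𝕂 ω x‖ = ‖x‖ := by
  have hsq : ‖frameAnalysis 𝕂 ω x‖ ^ 2 = ‖x‖ ^ 2 := by
    rw [EuclideanSpace.norm_eq, Real.sq_sqrt (by positivity), hω x]
    exact sum_congr rfl fun k _ => by simp [frameAnalysis, norm_inner_symm]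
  exact (pow_left_inj₀ (norm_nonneg _) (norm_nonneg _) two_ne_zero).mp hsq

theorem inner_eq_sum (hω : IsParsevalFrame 𝕂 ω) (x g : H) :
    (inner 𝕂 x g : 𝕂) = ∑ k, (inner 𝕂 x (ω k) : 𝕂) * inner 𝕂 (ω k) g := by
  rw [← (LinearMap.norm_map_iff_inner_map_map _).mp hω.norm_frameAnalysis x g, PiLp.inner_apply]
  simp [frameAnalysis, inner_conj_symm, mul_comm]

theorem inner_eq_sum_support (hω : IsParsevalFrame 𝕂 ω) (x g : H) :
    (inner 𝕂 x g : 𝕂) =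
      ∑ k with (inner 𝕂 x (ω k) : 𝕂) ≠ 0, (inner 𝕂 x (ω k) : 𝕂) * inner 𝕂 (ω k) g := by
  rw [hω.inner_eq_sum, sum_filter_of_ne]
  exact fun k _ hk => left_ne_zero_of_mul hk

theorem norm_sq_eq_sum_support (hω : IsParsevalFrame 𝕂 ω) (x : H) :
    ‖x‖ ^ 2 = ∑ k with (inner 𝕂 x (ω k) : 𝕂) ≠ 0, ‖(inner 𝕂 x (ω k) : 𝕂)‖ ^ 2 := by
  rw [hω x, sum_filter_of_ne]
  intro k _ hk h0
  simp [h0] at hk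

theorem norm_inner_sq_le (hω : IsParsevalFrame 𝕂 ω) (x g : H) {M : ℝ}
    (hM : ∀ k, ‖(inner 𝕂 (ω k) g : 𝕂)‖ ^ 2 ≤ M) :
    ‖(inner 𝕂 x g : 𝕂)‖ ^ 2 ≤ #{k | (inner 𝕂 x (ω k) : 𝕂) ≠ 0} * M * ‖x‖ ^ 2 := by
  set S := ({k | (inner 𝕂 x (ω k) : 𝕂) ≠ 0} : Finset ι)
  have htri : ‖(inner 𝕂 x g : 𝕂)‖ ≤
      ∑ k ∈ S, ‖(inner 𝕂 x (ω k) : 𝕂)‖ * ‖(inner 𝕂 (ω k) g : 𝕂)‖ := by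
    rw [hω.inner_eq_sum_support]
    exact (norm_sum_le _ _).trans_eq (sum_congr rfl fun k _ => norm_mul _ _)
  have hx : ∑ k ∈ S, ‖(inner 𝕂 x (ω k) : 𝕂)‖ ^ 2 ≤ ‖x‖ ^ 2 :=
    (hω x).symm ▸ sum_le_univ_sum_of_nonneg fun k => by positivity
  have hg : ∑ k ∈ S, ‖(inner 𝕂 (ω k) g : 𝕂)‖ ^ 2 ≤ #S * M := by
    simpa using sum_le_card_nsmul S _ M fun k _ => hM k
  calc ‖(inner 𝕂 x g : 𝕂)‖ ^ 2
      ≤ (∑ k ∈ S, ‖(inner 𝕂 x (ω k) : 𝕂)‖ * ‖(inner 𝕂 (ω k) g : 𝕂)‖) ^ 2 := by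
        gcongr
    _ ≤ (∑ k ∈ S, ‖(inner 𝕂 x (ω k) : 𝕂)‖ ^ 2) * ∑ k ∈ S, ‖(inner 𝕂 (ω k) g : 𝕂)‖ ^ 2 :=
        sum_mul_sq_le_sq_mul_sq _ _ _
    _ ≤ ‖x‖ ^ 2 * (#S * M) := by gcongr
    _ = #S * M * ‖x‖ ^ 2 := by ring

theorem one_le_card_support_mul_card_support_mul {τ : κ → H} (hτ : IsParsevalFrame 𝕂 τ)
    (hω : IsParsevalFrame 𝕂 ω) {x : H} (hx : x ≠ 0) {M : ℝ}
    (hM : ∀ j k, ‖(inner 𝕂 (τ j) (ω k) : 𝕂)‖ ^ 2 ≤ M) :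
    1 ≤ (#{j | (inner 𝕂 x (τ j) : 𝕂) ≠ 0} : ℝ) * #{k | (inner 𝕂 x (ω k) : 𝕂) ≠ 0} * M := by
  set Sτ := ({j | (inner 𝕂 x (τ j) : 𝕂) ≠ 0} : Finset κ)
  set Sω := ({k | (inner 𝕂 x (ω k) : 𝕂) ≠ 0} : Finset ι)
  have hcoeff (j : κ) : ‖(inner 𝕂 x (τ j) : 𝕂)‖ ^ 2 ≤ #Sω * M * ‖x‖ ^ 2 :=
    hω.norm_inner_sq_le x (τ j) fun k => norm_inner_symm (𝕜 := 𝕂) (ω k) (τ j) ▸ hM j k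
  have hx2 : 0 < ‖x‖ ^ 2 := by positivity
  have : 1 * ‖x‖ ^ 2 ≤ #Sτ * #Sω * M * ‖x‖ ^ 2 :=
    calc 1 * ‖x‖ ^ 2 = ∑ j ∈ Sτ, ‖(inner 𝕂 x (τ j) : 𝕂)‖ ^ 2 := by
          rw [one_mul, hτ.norm_sq_eq_sum_support]
      _ ≤ ∑ _j ∈ Sτ, #Sω * M * ‖x‖ ^ 2 := sum_le_sum fun j _ => hcoeff j
      _ = #Sτ * #Sω * M * ‖x‖ ^ 2 := by rw [sum_const, nsmul_eq_mul]; ring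
  exact le_of_mul_le_mul_right this hx2

end IsParsevalFrame

end

theorem ricaud_torresani_uncertainty_general
    {𝕂 : Type*} [RCLike 𝕂] {H : Type*} [NormedAddCommGroup H] [InnerProductSpace 𝕂 H]
    {n : ℕ} (τ ω : Fin n → H)
    (hτ : ∀ h : H, ‖h‖ ^ 2 = ∑ j, ‖(inner 𝕂 h (τ j) : 𝕂)‖ ^ 2)
    (hω : ∀ h : H, ‖h‖ ^ 2 = ∑ k, ‖(inner 𝕂 h (ω k) : 𝕂)‖ ^ 2)
    (h : H) (hh : h ≠ 0) :
    ((univ.filter fun j => (inner 𝕂 h (τ j) : 𝕂) ≠ 0).card : ℝ) *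
      ((univ.filter fun k => (inner 𝕂 h (ω k) : 𝕂) ≠ 0).card : ℝ) ≥
      1 / (⨆ jk : Fin n × Fin n, ‖(inner 𝕂 (τ jk.1) (ω jk.2) : 𝕂)‖ ^ 2) := by
  set M := ⨆ jk : Fin n × Fin n, ‖(inner 𝕂 (τ jk.1) (ω jk.2) : 𝕂)‖ ^ 2
  have hM (j k : Fin n) : ‖(inner 𝕂 (τ j) (ω k) : 𝕂)‖ ^ 2 ≤ M :=
    le_ciSup (f := fun jk : Fin n × Fin n => ‖(inner 𝕂 (τ jk.1) (ω jk.2) : 𝕂)‖ ^ 2)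
      (Set.finite_range _).bddAbove (j, k)
  have key := IsParsevalFrame.one_le_card_support_mul_card_support_mul hτ hω hh hM
  have hMpos : 0 < M := pos_of_mul_pos_right (one_pos.trans_le key) (by positivity)
  exact (div_le_iff₀ hMpos).mpr key

theorem ricaud_torresani_uncertainty
    {𝕂 : Type*} [RCLike 𝕂] {H : Type*} [NormedAddCommGroup H] [InnerProductSpace 𝕂 H]
    [FiniteDimensional 𝕂 H]
    {n : ℕ} (τ ω : Fin n → H)
    (hτ : ∀ h : H, ‖h‖ ^ 2 = ∑ j, ‖(inner 𝕂 h (τ j) : 𝕂)‖ ^ 2)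
    (hω : ∀ h : H, ‖h‖ ^ 2 = ∑ k, ‖(inner 𝕂 h (ω k) : 𝕂)‖ ^ 2)
    (h : H) (hh : h ≠ 0) :
    ((univ.filter fun j => (inner 𝕂 h (τ j) : 𝕂) ≠ 0).card : ℝ) *
      ((univ.filter fun k => (inner 𝕂 h (ω k) : 𝕂) ≠ 0).card : ℝ) ≥
      1 / (⨆ jk : Fin n × Fin n, ‖(inner 𝕂 (τ jk.1) (ω jk.2) : 𝕂)‖ ^ 2) :=
  ricaud_torresani_uncertainty_general τ ω hτ hω h hh
end

section
/- Let {τ_j}_{j=1}^n and {ω_k}_{k=1}^n be orthonormal bases for a finite-dimensional Hilbert space H. Then for every nonzero h ∈ H, ‖θ_τ h‖_0 · ‖θ_ω h‖_0 ≥ 1 / max_{1≤j,k≤n} |⟨τ_j, ω_k⟩|², where θ_τ h = (⟨h, τ_j⟩)_j and θ_ω h = (⟨h, ω_k⟩)_k. -/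
/-!
Expanding `h` in the basis `τ`, only the coordinates in the support `S` of `θ_τ h` contribute, so
by Cauchy–Schwarz and Parseval `|⟨h, ω_k⟩|² ≤ ‖h‖² · |S| · M`, where `M` is the largest
`|⟨τ_j, ω_k⟩|²`. Summing over the support `T` of `θ_ω h` and using Parseval again gives
`‖h‖² ≤ |S| · |T| · M · ‖h‖²`.
-/

open Finset

namespace OrthonormalBasis

variable {ι 𝕜 E : Type*} [Fintype ι] [RCLike 𝕜] [NormedAddCommGroup E] [InnerProductSpace 𝕜 E]

theorem norm_inner_sq_le_norm_sq_mul_sum (b : OrthonormalBasis ι 𝕜 E) {s : Finset ι} {x : E}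
    (hx : ∀ i ∉ s, inner 𝕜 x (b i) = 0) (y : E) :
    ‖inner 𝕜 x y‖ ^ 2 ≤ ‖x‖ ^ 2 * ∑ i ∈ s, ‖inner 𝕜 (b i) y‖ ^ 2 := by
  have hexpand : inner 𝕜 x y = ∑ i ∈ s, inner 𝕜 x (b i) * inner 𝕜 (b i) y := by
    rw [← b.sum_inner_mul_inner x y]
    exact (sum_subset (subset_univ s) fun i _ hi => by rw [hx i hi, zero_mul]).symm
  have hparseval : ∑ i ∈ s, ‖inner 𝕜 x (b i)‖ ^ 2 = ‖x‖ ^ 2 := by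
    rw [← b.sum_sq_norm_inner_left x]
    exact sum_subset (subset_univ s) fun i _ hi => by rw [hx i hi, norm_zero, sq, zero_mul]
  calc ‖inner 𝕜 x y‖ ^ 2
      ≤ (∑ i ∈ s, ‖inner 𝕜 x (b i)‖ * ‖inner 𝕜 (b i) y‖) ^ 2 := by
        rw [hexpand]
        gcongr
        exact (norm_sum_le _ _).trans_eq (by simp only [norm_mul])
    _ ≤ (∑ i ∈ s, ‖inner 𝕜 x (b i)‖ ^ 2) * ∑ i ∈ s, ‖inner 𝕜 (b i) y‖ ^ 2 :=
        sum_mul_sq_le_sq_mul_sq _ _ _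
    _ = ‖x‖ ^ 2 * ∑ i ∈ s, ‖inner 𝕜 (b i) y‖ ^ 2 := by rw [hparseval]

end OrthonormalBasis

theorem elad_bruckstein_uncertainty_general
    {𝕂 : Type*} [RCLike 𝕂] {H : Type*} [NormedAddCommGroup H] [InnerProductSpace 𝕂 H]
    {n : ℕ} (τ ω : OrthonormalBasis (Fin n) 𝕂 H)
    (h : H) (hh : h ≠ 0) :
    ((univ.filter fun j => (inner 𝕂 h (τ j) : 𝕂) ≠ 0).card : ℝ) *
      ((univ.filter fun k => (inner 𝕂 h (ω k) : 𝕂) ≠ 0).card : ℝ) ≥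
      1 / (⨆ jk : Fin n × Fin n, ‖(inner 𝕂 (τ jk.1) (ω jk.2) : 𝕂)‖ ^ 2) := by
  set S := univ.filter fun j => (inner 𝕂 h (τ j) : 𝕂) ≠ 0
  set T := univ.filter fun k => (inner 𝕂 h (ω k) : 𝕂) ≠ 0
  set M := ⨆ jk : Fin n × Fin n, ‖(inner 𝕂 (τ jk.1) (ω jk.2) : 𝕂)‖ ^ 2
  have hM : ∀ j k, ‖(inner 𝕂 (τ j) (ω k) : 𝕂)‖ ^ 2 ≤ M := fun j k =>
    le_ciSup (f := fun jk : Fin n × Fin n => ‖(inner 𝕂 (τ jk.1) (ω jk.2) : 𝕂)‖ ^ 2)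
      (Set.finite_range _).bddAbove (j, k)
  have hcoord : ∀ k, ‖(inner 𝕂 h (ω k) : 𝕂)‖ ^ 2 ≤ ‖h‖ ^ 2 * (S.card * M) := fun k =>
    (τ.norm_inner_sq_le_norm_sq_mul_sum (s := S) (fun j hj => by simpa [S] using hj) (ω k)).trans
      (by gcongr; simpa using sum_le_card_nsmul S _ M fun j _ => hM j k)
  have hkey : ‖h‖ ^ 2 ≤ ‖h‖ ^ 2 * (S.card * T.card * M) :=
    calc ‖h‖ ^ 2 = ∑ k ∈ T, ‖(inner 𝕂 h (ω k) : 𝕂)‖ ^ 2 := by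
          rw [sum_filter_of_ne fun k _ hk => by simpa using hk, ω.sum_sq_norm_inner_left]
      _ ≤ ∑ _k ∈ T, ‖h‖ ^ 2 * (S.card * M) := sum_le_sum fun k _ => hcoord k
      _ = ‖h‖ ^ 2 * (S.card * T.card * M) := by rw [sum_const, nsmul_eq_mul]; ring
  have hone : 1 ≤ (S.card : ℝ) * T.card * M :=
    (le_mul_iff_one_le_right (pow_pos (norm_pos_iff.mpr hh) 2)).mp hkey
  have hMpos : 0 < M := pos_of_mul_pos_right (one_pos.trans_le hone) (by positivity)
  exact (div_le_iff₀ hMpos).2 hone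

theorem elad_bruckstein_uncertainty
    {𝕂 : Type*} [RCLike 𝕂] {H : Type*} [NormedAddCommGroup H] [InnerProductSpace 𝕂 H]
    [FiniteDimensional 𝕂 H]
    {n : ℕ} (τ ω : OrthonormalBasis (Fin n) 𝕂 H)
    (h : H) (hh : h ≠ 0) :
    ((univ.filter fun j => (inner 𝕂 h (τ j) : 𝕂) ≠ 0).card : ℝ) *
      ((univ.filter fun k => (inner 𝕂 h (ω k) : 𝕂) ≠ 0).card : ℝ) ≥
      1 / (⨆ jk : Fin n × Fin n, ‖(inner 𝕂 (τ jk.1) (ω jk.2) : 𝕂)‖ ^ 2) :=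
  elad_bruckstein_uncertainty_general τ ω h hh
end

section
/- For every d ∈ ℕ and every nonzero h ∈ ℂ^d, ‖h‖_0 · ‖ĥ‖_0 ≥ d, where ĥ denotes the discrete Fourier transform of h and ‖·‖_0 counts nonzero entries. -/
/-!
Let `M = |h j₀|` be the largest modulus of an entry of `h`. Each DFT coefficient is a sum of
`‖h‖₀` terms of modulus at most `M`, so `|ĥ k| ≤ ‖h‖₀ M`. Inverting the DFT writes `d h j₀` as a
sum of `‖ĥ‖₀` terms of modulus `|ĥ k|`, whence `d M ≤ ‖ĥ‖₀ ‖h‖₀ M`. Only the unimodularity of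
the kernel and the inversion formula enter, so any primitive `d`-th root of unity in a normed
field can serve as the kernel.
-/

open Finset Complex

section Uncertainty

variable {ι κ E F : Type*} [Fintype ι] [Fintype κ] [NormedAddGroup E] [NormedAddGroup F]

lemma sum_norm_le_card_support_mul [DecidableEq E] (f : ι → E) {M : ℝ}
    (hM : ∀ i, ‖f i‖ ≤ M) : ∑ i, ‖f i‖ ≤ #{i | f i ≠ 0} * M :=
  calc ∑ i, ‖f i‖ = ∑ i with f i ≠ 0, ‖f i‖ :=
        (sum_filter_of_ne fun _ _ hi => norm_ne_zero_iff.mp hi).symm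
    _ ≤ #{i | f i ≠ 0} • M := sum_le_card_nsmul _ _ _ fun i _ => hM i
    _ = #{i | f i ≠ 0} * M := nsmul_eq_mul _ _

theorem le_card_support_mul_card_support [DecidableEq E] [DecidableEq F] {f : ι → E}
    {g : κ → F} {c : ℝ} (hf : f ≠ 0) (hg : ∀ k, ‖g k‖ ≤ ∑ i, ‖f i‖)
    (hfg : ∀ i, c * ‖f i‖ ≤ ∑ k, ‖g k‖) :
    c ≤ #{i | f i ≠ 0} * #{k | g k ≠ 0} := by
  obtain ⟨i₀, hi₀⟩ := Function.ne_iff.mp hf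
  obtain ⟨i₁, -, hmax⟩ := exists_max_image univ (fun i => ‖f i‖) ⟨i₀, mem_univ _⟩
  have hM : 0 < ‖f i₁‖ := (norm_pos_iff.mpr hi₀).trans_le (hmax i₀ (mem_univ _))
  have hg' : ∀ k, ‖g k‖ ≤ #{i | f i ≠ 0} * ‖f i₁‖ := fun k =>
    (hg k).trans (sum_norm_le_card_support_mul f fun i => hmax i (mem_univ _))
  refine le_of_mul_le_mul_right ?_ hM
  calc c * ‖f i₁‖ ≤ ∑ k, ‖g k‖ := hfg i₁
    _ ≤ #{k | g k ≠ 0} * (#{i | f i ≠ 0} * ‖f i₁‖) := sum_norm_le_card_support_mul g hg'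
    _ = #{i | f i ≠ 0} * #{k | g k ≠ 0} * ‖f i₁‖ := by ring

end Uncertainty

section DFT

variable {K : Type*} {d : ℕ}

def dft [Semiring K] (ζ : K) (f : Fin d → K) (k : Fin d) : K :=
  ∑ j, f j * ζ ^ (j.1 * k.1)

variable [Field K] {ζ : K}

lemma IsPrimitiveRoot.sum_pow_div_pow (hζ : IsPrimitiveRoot ζ d) (i j : Fin d) :
    ∑ k : Fin d, (ζ ^ i.1 / ζ ^ j.1) ^ k.1 = if i = j then (d : K) else 0 := by
  have hζj : ζ ^ j.1 ≠ 0 := pow_ne_zero _ (hζ.ne_zero j.pos.ne')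
  split_ifs with hij
  · simp [hij, hζj]
  · have hne : ζ ^ i.1 / ζ ^ j.1 ≠ 1 := fun h =>
      hij (Fin.ext (hζ.pow_inj i.2 j.2 ((div_eq_one_iff_eq hζj).mp h)))
    have hpow : (ζ ^ i.1 / ζ ^ j.1) ^ d = 1 := by
      rw [div_pow, ← pow_mul, ← pow_mul, mul_comm i.1, mul_comm j.1, pow_mul, pow_mul,
        hζ.pow_eq_one, one_pow, one_pow, div_one]
    rw [Fin.sum_univ_eq_sum_range (fun k => (ζ ^ i.1 / ζ ^ j.1) ^ k), geom_sum_eq hne, hpow,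
      sub_self, zero_div]

theorem IsPrimitiveRoot.dft_inv_dft (hζ : IsPrimitiveRoot ζ d) (f : Fin d → K) (j : Fin d) :
    dft ζ⁻¹ (dft ζ f) j = d * f j := by
  have hterm : ∀ i k : Fin d,
      ζ ^ (i.1 * k.1) * ζ⁻¹ ^ (k.1 * j.1) = (ζ ^ i.1 / ζ ^ j.1) ^ k.1 := fun i k => by
    rw [div_pow, ← pow_mul, ← pow_mul, inv_pow, div_eq_mul_inv, mul_comm k.1 j.1]
  simp only [dft, sum_mul, mul_assoc, hterm]
  rw [sum_comm]
  simp only [← mul_sum, hζ.sum_pow_div_pow, mul_ite, mul_zero, sum_ite_eq', mem_univ, if_true,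
    mul_comm]

end DFT

section NormedDFT

variable {K : Type*} [NormedField K] {d : ℕ} {ζ : K}

lemma norm_dft_le (hζ : ‖ζ‖ = 1) (f : Fin d → K) (k : Fin d) :
    ‖dft ζ f k‖ ≤ ∑ j, ‖f j‖ :=
  (norm_sum_le _ _).trans_eq (by simp only [norm_mul, norm_pow, hζ, one_pow, mul_one])

theorem IsPrimitiveRoot.norm_natCast_le_card_support_mul_card_support_dft [DecidableEq K]
    (hζ : IsPrimitiveRoot ζ d) {f : Fin d → K} (hf : f ≠ 0) :
    ‖(d : K)‖ ≤ #{j | f j ≠ 0} * #{k | dft ζ f k ≠ 0} := by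
  obtain ⟨j₀, -⟩ := Function.ne_iff.mp hf
  have hζ1 : ‖ζ‖ = 1 := (pow_eq_one_iff_of_nonneg (norm_nonneg ζ) j₀.pos.ne').mp <| by
    rw [← norm_pow, hζ.pow_eq_one, norm_one]
  refine le_card_support_mul_card_support hf (norm_dft_le hζ1 f) fun j => ?_
  calc ‖(d : K)‖ * ‖f j‖ = ‖dft ζ⁻¹ (dft ζ f) j‖ := by
        rw [hζ.dft_inv_dft, norm_mul]
    _ ≤ ∑ k, ‖dft ζ f k‖ := norm_dft_le (by rw [norm_inv, hζ1, inv_one]) _ _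

end NormedDFT

theorem donoho_stark_uncertainty (d : ℕ) (h : Fin d → ℂ) (hh : h ≠ 0) :
    d ≤ (univ.filter fun j : Fin d => h j ≠ 0).card *
      (univ.filter fun k : Fin d =>
        (∑ j : Fin d, h j *
          Complex.exp (-2 * (Real.pi : ℂ) * Complex.I * (j.1 : ℂ) * (k.1 : ℂ) / (d : ℂ))) ≠ 0).card := by
  rcases Nat.eq_zero_or_pos d with rfl | hd
  · exact Nat.zero_le _
  have hζ : IsPrimitiveRoot (Complex.exp (-(2 * Real.pi * Complex.I / d))) d := by
    rw [Complex.exp_neg]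
    exact (Complex.isPrimitiveRoot_exp d hd.ne').inv
  have hkernel : ∀ j k : Fin d,
      Complex.exp (-2 * (Real.pi : ℂ) * Complex.I * (j.1 : ℂ) * (k.1 : ℂ) / (d : ℂ)) =
        Complex.exp (-(2 * Real.pi * Complex.I / d)) ^ (j.1 * k.1) := fun j k => by
    rw [← Complex.exp_nat_mul]
    congr 1
    push_cast
    ring
  have hdft := hζ.norm_natCast_le_card_support_mul_card_support_dft hh
  simp only [dft, ← hkernel, Complex.norm_natCast] at hdft
  exact_mod_cast hdft
end

section
/- For every d ∈ ℕ and every nonzero h ∈ ℂ^d, ((‖h‖_0 + ‖ĥ‖_0)/2)² ≥ d, equivalently ‖h‖_0 + ‖ĥ‖_0 ≥ 2√d, where ĥ is the discrete Fourier transform of h. -/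
/-!
If `f` attains its maximal modulus `M` at `i₀`, every coefficient of the transform is bounded by
`‖f‖₀ · M` (the kernel is unimodular), while inverting the transform at `i₀` gives
`d · M ≤ ‖f̂‖₀ · ‖f‖₀ · M`. Hence `‖f‖₀ · ‖f̂‖₀ ≥ d`, and AM-GM turns the product into the sum.
-/

open Finset Complex
open scoped Real

section Uncertainty

variable {ι κ : Type*} [Fintype ι] [Fintype κ]

lemma norm_sum_mul_le_card_support_mul {R : Type*} [SeminormedRing R] [DecidableEq R]
    (a b : ι → R) {M : ℝ} (ha : ∀ i, ‖a i‖ ≤ M) (hb : ∀ i, ‖b i‖ ≤ 1) :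
    ‖∑ i, a i * b i‖ ≤ #{i | a i ≠ 0} * M := by
  calc ‖∑ i, a i * b i‖
      = ‖∑ i with a i ≠ 0, a i * b i‖ := by
        rw [sum_filter_of_ne fun i _ hi => left_ne_zero_of_mul hi]
    _ ≤ ∑ i with a i ≠ 0, ‖a i * b i‖ := norm_sum_le _ _
    _ ≤ ∑ i with a i ≠ 0, M := by
        gcongr with i
        simpa using norm_mul_le_of_le (ha i) (hb i)
    _ = #{i | a i ≠ 0} * M := by rw [sum_const, nsmul_eq_mul]

theorem le_card_support_mul_card_support_of_inversion {𝕜 : Type*} [RCLike 𝕜] [DecidableEq 𝕜]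
    (f : ι → 𝕜) (g : κ → 𝕜) (K : ι → κ → 𝕜) (L : κ → ι → 𝕜) (n : ℕ)
    (hg : ∀ k, g k = ∑ i, f i * K i k) (hf : ∀ i, n * f i = ∑ k, g k * L k i)
    (hK : ∀ i k, ‖K i k‖ ≤ 1) (hL : ∀ k i, ‖L k i‖ ≤ 1) (hf₀ : f ≠ 0) : (n : ℝ) ≤ #{i | f i ≠ 0} * #{k | g k ≠ 0} := by
  obtain ⟨i, hi⟩ := Function.ne_iff.1 hf₀
  obtain ⟨i₀, -, hi₀⟩ := exists_max_image univ (fun i => ‖f i‖) ⟨i, mem_univ i⟩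
  have hM : 0 < ‖f i₀‖ := (norm_pos_iff.2 hi).trans_le (hi₀ i (mem_univ i))
  have hg_le (k : κ) : ‖g k‖ ≤ #{i | f i ≠ 0} * ‖f i₀‖ := by
    rw [hg]
    exact norm_sum_mul_le_card_support_mul _ _ (fun i => hi₀ i (mem_univ i)) (hK · k)
  have key : n * ‖f i₀‖ ≤ #{k | g k ≠ 0} * (#{i | f i ≠ 0} * ‖f i₀‖) := by
    calc n * ‖f i₀‖ = ‖(n : 𝕜) * f i₀‖ := by rw [norm_mul, RCLike.norm_natCast]
      _ = ‖∑ k, g k * L k i₀‖ := by rw [hf]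
      _ ≤ _ := norm_sum_mul_le_card_support_mul _ _ hg_le (hL · i₀)
  nlinarith

end Uncertainty

lemma IsPrimitiveRoot.sum_pow_mul_inv_pow {K : Type*} [Field K] {ζ : K} {d : ℕ}
    (hζ : IsPrimitiveRoot ζ d) (i j : Fin d) :
    ∑ k : Fin d, ζ ^ (i * k : ℕ) * (ζ ^ (j * k : ℕ))⁻¹ = if i = j then (d : K) else 0 := by
  have hζ₀ : ζ ≠ 0 := hζ.ne_zero i.pos.ne'
  simp_rw [pow_mul, ← inv_pow, ← mul_pow]
  rw [Fin.sum_univ_eq_sum_range (fun k => (ζ ^ (i : ℕ) * ζ⁻¹ ^ (j : ℕ)) ^ k)]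
  split_ifs with hij
  · simp [hij, hζ₀]
  · have hx : ζ ^ (i : ℕ) * ζ⁻¹ ^ (j : ℕ) ≠ 1 := fun h =>
      hij <| Fin.ext <| hζ.pow_inj i.2 j.2 <| by
        rwa [inv_pow, mul_inv_eq_one₀ (pow_ne_zero _ hζ₀)] at h
    rw [geom_sum_eq hx, mul_pow, ← pow_mul, ← pow_mul, mul_comm (i : ℕ), mul_comm (j : ℕ),
      pow_mul, pow_mul, hζ.pow_eq_one, hζ.inv.pow_eq_one]
    simp

lemma IsPrimitiveRoot.sum_dft_mul_pow {K : Type*} [Field K] {ζ : K} {d : ℕ}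
    (hζ : IsPrimitiveRoot ζ d) (h : Fin d → K) (i : Fin d) :
    ∑ k : Fin d, (∑ j : Fin d, h j * (ζ ^ (j * k : ℕ))⁻¹) * ζ ^ (i * k : ℕ) = d * h i := by
  calc _ = ∑ j, h j * ∑ k : Fin d, ζ ^ (i * k : ℕ) * (ζ ^ (j * k : ℕ))⁻¹ := by
        simp_rw [sum_mul, mul_sum]
        rw [sum_comm]
        congr! 2 with j - k -
        ring
    _ = d * h i := by simp [hζ.sum_pow_mul_inv_pow, mul_comm]

theorem IsPrimitiveRoot.le_card_support_mul_card_support_dft {ζ : ℂ} {d : ℕ}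
    (hζ : IsPrimitiveRoot ζ d) (h : Fin d → ℂ) (hh : h ≠ 0) :
    (d : ℝ) ≤ #{j | h j ≠ 0} * #{k : Fin d | ∑ j : Fin d, h j * (ζ ^ (j * k : ℕ))⁻¹ ≠ 0} := by
  obtain ⟨j₀, -⟩ := Function.ne_iff.1 hh
  have hnorm (n : ℕ) : ‖ζ ^ n‖ = 1 := by rw [norm_pow, hζ.norm'_eq_one j₀.pos.ne', one_pow]
  exact le_card_support_mul_card_support_of_inversion h _
    (fun j k : Fin d => (ζ ^ (j * k : ℕ))⁻¹) (fun k i : Fin d => ζ ^ (i * k : ℕ)) d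
    (fun _ => rfl) (fun i => (hζ.sum_dft_mul_pow h i).symm) (fun _ _ => by simp [hnorm])
    (fun _ _ => (hnorm _).le) hh

lemma exp_neg_two_pi_I_mul_div (d j k : ℕ) :
    exp (-2 * π * I * j * k / d) = (exp (2 * π * I / d) ^ (j * k))⁻¹ := by
  rw [← exp_nat_mul, ← exp_neg]
  congr 1
  push_cast
  ring

theorem donoho_stark_uncertainty_sum (d : ℕ) (h : Fin d → ℂ) (hh : h ≠ 0) :
    ((((univ.filter fun j : Fin d => h j ≠ 0).card : ℝ) +
      ((univ.filter fun k : Fin d =>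
        (∑ j : Fin d, h j *
          Complex.exp (-2 * (Real.pi : ℂ) * Complex.I * (j.1 : ℂ) * (k.1 : ℂ) / (d : ℂ))) ≠ 0).card : ℝ)) / 2) ^ 2
      ≥ d := by
  obtain ⟨j₀, -⟩ := Function.ne_iff.1 hh
  have key := (isPrimitiveRoot_exp d j₀.pos.ne').le_card_support_mul_card_support_dft h hh
  simp_rw [exp_neg_two_pi_I_mul_div]
  nlinarith [four_mul_le_sq_add (#{j : Fin d | h j ≠ 0} : ℝ)
    #{k : Fin d | ∑ j : Fin d, h j * (exp (2 * π * I / d) ^ (j * k : ℕ))⁻¹ ≠ 0}]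
end

section
/- Let X be a finite-dimensional Banach space, 1 < p < ∞ with conjugate exponent q, and let ({f_j}_{j=1}^n, {τ_j}_{j=1}^n) and ({g_k}_{k=1}^m, {ω_k}_{k=1}^m) be p-Schauder frames for X. Then for every nonzero x ∈ X, ‖x‖^p ≤ (max_{j,k} |f_j(ω_k)|)^p · ‖θ_f x‖_0 · ‖x‖^p · (‖θ_g x‖_0)^{p/q}. -/
/-!
Expanding `x` in the frame `(g, ω)` gives `f j x = ∑ k, g k x * f j (ω k)`, a sum over the
support of `θ_g x` only, so Hölder's inequality on that support bounds `‖f j x‖` by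
`A * ‖x‖ * ‖θ_g x‖₀ ^ (1 / q)`, where `A` is the largest `‖f j (ω k)‖`. Summing the `p`-th powers
of these bounds over the support of `θ_f x` gives the estimate.
-/

open Finset

section

variable {ι : Type*} [Fintype ι]

theorem norm_map_le_mul_sum_norm_coeff {𝕂 X F : Type*} [NormedField 𝕂]
    [AddCommGroup X] [Module 𝕂 X] [NormedAddCommGroup F] [NormedSpace 𝕂 F]
    (φ : X →ₗ[𝕂] F) {x : X} {c : ι → 𝕂} {ω : ι → X} (hx : x = ∑ k, c k • ω k)
    {A : ℝ} (hA : ∀ k, ‖φ (ω k)‖ ≤ A) :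
    ‖φ x‖ ≤ A * ∑ k, ‖c k‖ := by
  rw [hx, map_sum, mul_sum]
  refine (norm_sum_le _ _).trans (sum_le_sum fun k _ => ?_)
  rw [map_smul, norm_smul, mul_comm]
  exact mul_le_mul_of_nonneg_right (hA k) (norm_nonneg _)

variable {E : Type*} [NormedAddCommGroup E] [DecidableEq E]

theorem sum_norm_rpow_filter_ne_zero {p : ℝ} (hp : 0 < p) (c : ι → E) :
    ∑ i ∈ univ.filter (fun i => c i ≠ 0), ‖c i‖ ^ p = ∑ i, ‖c i‖ ^ p :=
  sum_filter_of_ne fun i _ hi hc => hi (by simp [hc, Real.zero_rpow hp.ne'])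

/-- Hölder's inequality against the indicator of the support of `c`. -/
theorem sum_norm_le_lp_mul_card_support_rpow {p q : ℝ} (hpq : p.HolderConjugate q)
    (c : ι → E) :
    ∑ i, ‖c i‖ ≤
      (∑ i, ‖c i‖ ^ p) ^ (1 / p) * ((univ.filter fun i => c i ≠ 0).card : ℝ) ^ (1 / q) := by
  set S := univ.filter fun i => c i ≠ 0
  calc ∑ i, ‖c i‖ = ∑ i ∈ S, ‖c i‖ * 1 := by
        simp only [mul_one]
        exact (sum_filter_of_ne (p := fun i => c i ≠ 0) fun i _ hi hc => hi (by simp [hc])).symm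
    _ ≤ (∑ i ∈ S, ‖c i‖ ^ p) ^ (1 / p) * (∑ i ∈ S, (1 : ℝ) ^ q) ^ (1 / q) :=
        Real.inner_le_Lp_mul_Lq_of_nonneg S hpq (fun _ _ => norm_nonneg _) fun _ _ => zero_le_one
    _ = (∑ i, ‖c i‖ ^ p) ^ (1 / p) * (S.card : ℝ) ^ (1 / q) := by
        simp [S, sum_norm_rpow_filter_ne_zero hpq.pos]

theorem sum_norm_rpow_le_card_support_mul {p M : ℝ} (hp : 0 < p) {c : ι → E}
    (hM : ∀ i, ‖c i‖ ≤ M) :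
    ∑ i, ‖c i‖ ^ p ≤ ((univ.filter fun i => c i ≠ 0).card : ℝ) * M ^ p := by
  rw [← sum_norm_rpow_filter_ne_zero hp, ← nsmul_eq_mul]
  exact sum_le_card_nsmul _ _ _ fun i _ =>
    Real.rpow_le_rpow (norm_nonneg _) (hM i) hp.le

end

theorem key_intermediate_estimate_general
    {𝕂 : Type*} [RCLike 𝕂] {X : Type*} [NormedAddCommGroup X] [NormedSpace 𝕂 X]
    {n m : ℕ} (p q : ℝ) (hp : 1 < p) (hpq : 1 / p + 1 / q = 1)
    (f : Fin n → (X →L[𝕂] 𝕂))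
    (g : Fin m → (X →L[𝕂] 𝕂)) (ω : Fin m → X)
    (hf1 : ∀ x : X, ‖x‖ ^ p = ∑ j, ‖f j x‖ ^ p)
    (hg1 : ∀ x : X, ‖x‖ ^ p = ∑ k, ‖g k x‖ ^ p)
    (hg2 : ∀ x : X, x = ∑ k, g k x • ω k)
    (x : X) :
    ‖x‖ ^ p ≤ (⨆ jk : Fin n × Fin m, ‖f jk.1 (ω jk.2)‖) ^ p *
      ((univ.filter fun j => f j x ≠ 0).card : ℝ) * ‖x‖ ^ p *
      ((univ.filter fun k => g k x ≠ 0).card : ℝ) ^ (p / q) := by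
  have hpq' : p.HolderConjugate q :=
    Real.holderConjugate_iff.mpr ⟨hp, by simpa only [one_div] using hpq⟩
  set A := ⨆ jk : Fin n × Fin m, ‖f jk.1 (ω jk.2)‖
  have hA : 0 ≤ A := Real.iSup_nonneg fun _ => norm_nonneg _
  set Ng : ℝ := ((univ.filter fun k => g k x ≠ 0).card : ℝ)
  have hNg : 0 ≤ Ng := Nat.cast_nonneg _
  have hcoord (j : Fin n) : ‖f j x‖ ≤ A * (‖x‖ * Ng ^ (1 / q)) := calc
    ‖f j x‖ ≤ A * ∑ k, ‖g k x‖ :=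
      norm_map_le_mul_sum_norm_coeff (f j).toLinearMap (hg2 x) fun k =>
        le_ciSup (f := fun jk : Fin n × Fin m => ‖f jk.1 (ω jk.2)‖)
          (Set.finite_range _).bddAbove (j, k)
    _ ≤ A * (‖x‖ * Ng ^ (1 / q)) := by
      gcongr
      simpa only [← hg1 x, one_div, Real.rpow_rpow_inv (norm_nonneg x) hpq'.ne_zero]
        using sum_norm_le_lp_mul_card_support_rpow hpq' fun k => g k x
  calc ‖x‖ ^ p = ∑ j, ‖f j x‖ ^ p := hf1 x
    _ ≤ ((univ.filter fun j => f j x ≠ 0).card : ℝ) * (A * (‖x‖ * Ng ^ (1 / q))) ^ p :=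
        sum_norm_rpow_le_card_support_mul hpq'.pos hcoord
    _ = A ^ p * ((univ.filter fun j => f j x ≠ 0).card : ℝ) * ‖x‖ ^ p * Ng ^ (p / q) := by
        rw [Real.mul_rpow hA (mul_nonneg (norm_nonneg x) (Real.rpow_nonneg hNg _)),
          Real.mul_rpow (norm_nonneg x) (Real.rpow_nonneg hNg _),
          ← Real.rpow_mul hNg, one_div_mul_eq_div]
        ring

theorem key_intermediate_estimate
    {𝕂 : Type*} [RCLike 𝕂] {X : Type*} [NormedAddCommGroup X] [NormedSpace 𝕂 X]
    [FiniteDimensional 𝕂 X]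
    {n m : ℕ} (p q : ℝ) (hp : 1 < p) (hpq : 1 / p + 1 / q = 1)
    (f : Fin n → (X →L[𝕂] 𝕂)) (τ : Fin n → X)
    (g : Fin m → (X →L[𝕂] 𝕂)) (ω : Fin m → X)
    (hf1 : ∀ x : X, ‖x‖ ^ p = ∑ j, ‖f j x‖ ^ p)
    (hf2 : ∀ x : X, x = ∑ j, f j x • τ j)
    (hg1 : ∀ x : X, ‖x‖ ^ p = ∑ k, ‖g k x‖ ^ p)
    (hg2 : ∀ x : X, x = ∑ k, g k x • ω k)
    (x : X) (hx : x ≠ 0) :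
    ‖x‖ ^ p ≤ (⨆ jk : Fin n × Fin m, ‖f jk.1 (ω jk.2)‖) ^ p *
      ((univ.filter fun j => f j x ≠ 0).card : ℝ) * ‖x‖ ^ p *
      ((univ.filter fun k => g k x ≠ 0).card : ℝ) ^ (p / q) :=
  key_intermediate_estimate_general p q hp hpq f g ω hf1 hg1 hg2 x
end
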